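/- If 0 ≤ ρ_S < 1, 0 ≤ ρ_G < 1 and α > 0, then the vector π is a stationary distribution of the buffer-occupancy Markov chain: for every state j ∈ {0,…,L}, Σ_{i=0}^{L} π(i)·M(i,j) = π(j). -/

import Mathlib

/-- The buffer-occupancy Markov chain transition matrix on states `{0,…,L}`. -/
noncomputable def Mmat (L : ℕ) (ρS ρG α : ℝ) :
    Matrix (Fin (L + 1)) (Fin (L + 1)) ℝ :=
  Matrix.of fun i j =>
    if i.val = 0 then
      -- empty buffer
      if j.val = 0 then ρS else if j.val = 1 then 1 - ρS else 0
    else if i.val = L then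
      -- full buffer
      if j.val + 1 = L then α * (1 - ρG) / (1 + α)
      else if j.val = L then (1 + α * ρG) / (1 + α)
      else 0
    else
      -- interior states
      if j.val + 1 = i.val then α * (1 - ρG) / (1 + α)
      else if j.val = i.val then (ρS + α * ρG) / (1 + α)
      else if j.val = i.val + 1 then (1 - ρS) / (1 + α)
      else 0

/-- The candidate stationary distribution `π` of the buffer-occupancy Markov chain. -/
noncomputable def piv (L : ℕ) (ρS ρG α : ℝ) : ℕ → ℝ := fun i =>
  let p : ℝ := (1 - ρS) / (1 + α)
  let q : ℝ := α * (1 - ρG) / (1 + α)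
  let π0 : ℝ := 1 / (1 + (1 - ρS) * ∑ k ∈ Finset.Icc 1 L, p ^ (k - 1) / q ^ k)
  if i = 0 then π0 else p ^ (i - 1) / q ^ i * (1 - ρS) * π0

/-!
The chain is a birth–death chain, so it suffices to check detailed balance
`π(i) M(i, i+1) = π(i+1) M(i+1, i)` between neighbouring states; the formula for `π` is exactly
the solution of these equations, `π(i+1) q = π(i) M(i, i+1)`. Summing detailed balance over `i`
and using that the rows of `M` sum to one gives `π M = π`.
-/

open Finset

namespace Matrix

variable {R : Type*} [CommSemiring R]

theorem vecMul_eq_self_of_detailed_balance {n : Type*} [Fintype n] {M : Matrix n n R}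
    {π : n → R} (hrow : ∀ i, ∑ j, M i j = 1) (hbal : ∀ i j, π i * M i j = π j * M j i) :
    π ᵥ* M = π := by
  ext j
  simp only [vecMul, dotProduct, hbal _ j, ← mul_sum, hrow, mul_one]

theorem detailed_balance_of_tridiagonal {m : ℕ} {M : Matrix (Fin m) (Fin m) R}
    {π : Fin m → R} (hfar : ∀ i j : Fin m, (i : ℕ) + 1 < j ∨ (j : ℕ) + 1 < i → M i j = 0)
    (hstep : ∀ i j : Fin m, (i : ℕ) + 1 = j → π i * M i j = π j * M j i) (i j : Fin m) :
    π i * M i j = π j * M j i := by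
  wlog hij : (i : ℕ) ≤ j generalizing i j
  · exact (this j i (by omega)).symm
  rcases hij.eq_or_lt with h | h
  · rw [Fin.ext h]
  rcases (Nat.succ_le_of_lt h).eq_or_lt with h' | h'
  · exact hstep i j h'
  · rw [hfar i j (.inl h'), hfar j i (.inr h'), mul_zero, mul_zero]

end Matrix

theorem Fin.sum_ite_val_eq {R : Type*} [AddCommMonoid R] {n k : ℕ} (hk : k < n) (c : R) :
    ∑ j : Fin n, (if (j : ℕ) = k then c else 0) = c := by
  have hval : ∀ j : Fin n, (j : ℕ) = k ↔ j = ⟨k, hk⟩ := fun j => by simp [Fin.ext_iff]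
  simp only [hval, sum_ite_eq', mem_univ, if_true]

section BufferChain

variable {L : ℕ} {ρS ρG α : ℝ}

theorem Mmat_apply_eq_zero_of_far {i j : Fin (L + 1)} (h : (i : ℕ) + 1 < j ∨ (j : ℕ) + 1 < i) :
    Mmat L ρS ρG α i j = 0 := by
  simp only [Mmat, Matrix.of_apply]
  split_ifs <;> first | rfl | omega

theorem Mmat_apply_of_val_eq_add_one {i j : Fin (L + 1)} (h : (i : ℕ) = j + 1) :
    Mmat L ρS ρG α i j = α * (1 - ρG) / (1 + α) := by
  simp only [Mmat, Matrix.of_apply]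
  split_ifs <;> first | rfl | omega

theorem Mmat_apply_of_add_one_eq_val {i j : Fin (L + 1)} (h : (i : ℕ) + 1 = j) :
    Mmat L ρS ρG α i j = if (i : ℕ) = 0 then 1 - ρS else (1 - ρS) / (1 + α) := by
  simp only [Mmat, Matrix.of_apply]
  split_ifs <;> first | rfl | omega

theorem Mmat_row_sum (hL : 1 ≤ L) (hα : 1 + α ≠ 0) (i : Fin (L + 1)) :
    ∑ j, Mmat L ρS ρG α i j = 1 := by
  simp only [Mmat, Matrix.of_apply]
  split_ifs with h0 hiL
  · have hsplit : ∀ j : Fin (L + 1),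
        (if (j : ℕ) = 0 then ρS else if (j : ℕ) = 1 then 1 - ρS else 0) =
          (if (j : ℕ) = 0 then ρS else 0) + (if (j : ℕ) = 1 then 1 - ρS else 0) := by
      intro j; split_ifs <;> first | omega | simp
    simp only [hsplit, sum_add_distrib, Fin.sum_ite_val_eq (by omega : 0 < L + 1),
      Fin.sum_ite_val_eq (by omega : 1 < L + 1)]
    ring
  · have hsplit : ∀ j : Fin (L + 1),
        (if (j : ℕ) + 1 = L then α * (1 - ρG) / (1 + α)
          else if (j : ℕ) = L then (1 + α * ρG) / (1 + α) else 0) =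
          (if (j : ℕ) = L - 1 then α * (1 - ρG) / (1 + α) else 0) +
            (if (j : ℕ) = L then (1 + α * ρG) / (1 + α) else 0) := by
      intro j; split_ifs <;> first | omega | simp
    simp only [hsplit, sum_add_distrib, Fin.sum_ite_val_eq (by omega : L - 1 < L + 1),
      Fin.sum_ite_val_eq (by omega : L < L + 1)]
    field_simp
    ring
  · have hsplit : ∀ j : Fin (L + 1),
        (if (j : ℕ) + 1 = i then α * (1 - ρG) / (1 + α)
          else if (j : ℕ) = i then (ρS + α * ρG) / (1 + α)
          else if (j : ℕ) = i + 1 then (1 - ρS) / (1 + α) else 0) =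
          (if (j : ℕ) = i - 1 then α * (1 - ρG) / (1 + α) else 0) +
            (if (j : ℕ) = i then (ρS + α * ρG) / (1 + α) else 0) +
            (if (j : ℕ) = i + 1 then (1 - ρS) / (1 + α) else 0) := by
      intro j; split_ifs <;> first | omega | simp
    simp only [hsplit, sum_add_distrib, Fin.sum_ite_val_eq (by omega : (i : ℕ) - 1 < L + 1),
      Fin.sum_ite_val_eq i.isLt, Fin.sum_ite_val_eq (by omega : (i : ℕ) + 1 < L + 1)]
    field_simp
    ring

theorem piv_add_one (i : ℕ) :
    piv L ρS ρG α (i + 1) =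
      ((1 - ρS) / (1 + α)) ^ i / (α * (1 - ρG) / (1 + α)) ^ (i + 1) * (1 - ρS) *
        piv L ρS ρG α 0 := by
  simp [piv]

theorem piv_mul_Mmat_of_add_one_eq_val (hG1 : ρG < 1) (hα : 0 < α) {i j : Fin (L + 1)}
    (h : (i : ℕ) + 1 = j) :
    piv L ρS ρG α i * Mmat L ρS ρG α i j = piv L ρS ρG α j * Mmat L ρS ρG α j i := by
  have hG : 1 - ρG ≠ 0 := (sub_pos.2 hG1).ne'
  rw [Mmat_apply_of_add_one_eq_val h, Mmat_apply_of_val_eq_add_one h.symm, ← h, piv_add_one]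
  rcases (i : ℕ) with _ | k
  · rw [if_pos rfl, zero_add, pow_zero, pow_one]
    field_simp [hα.ne']
  · rw [if_neg k.add_one_ne_zero, piv_add_one]
    field_simp
    ring

end BufferChain

theorem stmt6_general (L : ℕ) (hL : 1 ≤ L) (ρS ρG α : ℝ)
    (hG1 : ρG < 1) (hα : 0 < α) :
    ∀ j : Fin (L + 1),
      ∑ i : Fin (L + 1), piv L ρS ρG α i.val * Mmat L ρS ρG α i j =
        piv L ρS ρG α j.val := by
  have hstationary := Matrix.vecMul_eq_self_of_detailed_balance
    (Mmat_row_sum hL (by positivity))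
    (Matrix.detailed_balance_of_tridiagonal (fun _ _ => Mmat_apply_eq_zero_of_far)
      (fun _ _ => piv_mul_Mmat_of_add_one_eq_val (ρS := ρS) hG1 hα))
  exact congrFun hstationary

/-- `π` is a stationary distribution of the buffer-occupancy chain:
`Σ_{i=0}^{L} π(i)·M(i,j) = π(j)` for every state `j`. -/
theorem stmt6 (L : ℕ) (hL : 1 ≤ L) (ρS ρG α : ℝ)
    (hS0 : 0 ≤ ρS) (hS1 : ρS < 1) (hG0 : 0 ≤ ρG) (hG1 : ρG < 1) (hα : 0 < α) :
    ∀ j : Fin (L + 1),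
      ∑ i : Fin (L + 1), piv L ρS ρG α i.val * Mmat L ρS ρG α i j =
        piv L ρS ρG α j.val :=
  stmt6_general L hL ρS ρG α hG1 hα
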